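/- arXiv:2603.20084 — 8 statements merged into one kernel-verified Lean document; each statement's English description precedes it below -/
import Mathlib

section
/- Let G be a finite group admitting a colouring bijection σ : G → G. Then the function c : G³ → G defined by c(x,y,z) = x⁻¹·σ(y)·z is a proper colouring of the graph 𝒢₃(G) with |G| colours; that is, whenever (x,y,z) and (x',y',z') are adjacent in 𝒢₃(G), we have c(x,y,z) ≠ c(x',y',z'). -/
/-- A bijection `σ : G → G` is a *colouring bijection* if the three maps
`x ↦ σ(x)·x`, `x ↦ x⁻¹·σ(x)` and `x ↦ x⁻¹·σ(x)·x` are bijections of `G`. -/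
def IsColouringBijection {G : Type*} [Group G] (σ : G → G) : Prop :=
  Function.Bijective σ ∧
    Function.Bijective (fun x => σ x * x) ∧
    Function.Bijective (fun x => x⁻¹ * σ x) ∧
    Function.Bijective (fun x => x⁻¹ * σ x * x)

/-- The connection set `S₃` of the Cayley graph `𝒢₃(G)`. -/
def connS3 (G : Type*) [Group G] : Set (G × G × G) :=
  {p | ∃ g : G, g ≠ 1 ∧
    (p = (g, 1, 1) ∨ p = (1, g, 1) ∨ p = (1, 1, g) ∨
      p = (g, g, 1) ∨ p = (1, g, g) ∨ p = (g, g, g))}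

/-- The Cayley graph `𝒢₃(G) = Cay(G³, S₃)`. -/
def cayley3 (G : Type*) [Group G] : SimpleGraph (G × G × G) where
  Adj u v := u ≠ v ∧ u * v⁻¹ ∈ connS3 G
  symm := by
    constructor
    rintro u v ⟨hne, g, hg, hc⟩
    refine ⟨hne.symm, g⁻¹, inv_ne_one.mpr hg, ?_⟩
    have key : v * u⁻¹ = (u * v⁻¹)⁻¹ := by group
    rcases hc with h | h | h | h | h | h <;>
      rw [key, h] <;> simp [Prod.ext_iff]
  loopless := by constructor; rintro u ⟨hne, -⟩; exact hne rfl

/-!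
Write `c(x,y,z) = x⁻¹ σ(y) z` and `u = s · v` with `s ∈ S₃`. For each of the six shapes of `s`
the colour can be rewritten so that the generator `g` only survives inside one of the maps
`σ`, `y ↦ σ(y) y`, `y ↦ y⁻¹ σ(y)`, `y ↦ y⁻¹ σ(y) y` (or next to `x` or `z` alone): for example
`c(x,y,z) = (x⁻¹ y) · (y⁻¹ σ(y) y) · (y⁻¹ z)`, and `(gx)⁻¹(gy) = x⁻¹ y`, `(gy)⁻¹(gz) = y⁻¹ z`.
Equal colours then force that map to take the same value at `g y` and `y`, so `g = 1` by injectivity.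
-/

open Function

section TripleColour

variable {G : Type*} [Group G] (σ : G → G)

def tripleColour (u : G × G × G) : G :=
  u.1⁻¹ * σ u.2.1 * u.2.2

variable {σ}

theorem tripleColour_eq_mul_mul_sigma (x y z : G) :
    tripleColour σ (x, y, z) = x⁻¹ * y * (y⁻¹ * σ y) * z := by
  simp only [tripleColour]; group

theorem tripleColour_eq_mul_sigma_mul (x y z : G) :
    tripleColour σ (x, y, z) = x⁻¹ * (σ y * y) * (y⁻¹ * z) := by
  simp only [tripleColour]; group

theorem tripleColour_eq_mul_conj_sigma (x y z : G) :
    tripleColour σ (x, y, z) = x⁻¹ * y * (y⁻¹ * σ y * y) * (y⁻¹ * z) := by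
  simp only [tripleColour]; group

theorem mul_inv_mul_mul_left (g x y : G) : (g * x)⁻¹ * (g * y) = x⁻¹ * y := by
  group

variable {g : G} (x y z : G)

theorem tripleColour_mul_fst_ne (hg : g ≠ 1) :
    tripleColour σ (g * x, y, z) ≠ tripleColour σ (x, y, z) := by
  intro h
  simp only [tripleColour, mul_inv_rev, mul_left_inj, mul_eq_left, inv_eq_one] at h
  exact hg h

theorem tripleColour_mul_snd_ne (hg : g ≠ 1) (hσ : Injective σ) :
    tripleColour σ (x, g * y, z) ≠ tripleColour σ (x, y, z) := by
  intro h
  simp only [tripleColour, mul_left_inj, mul_right_inj] at h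
  exact hg (mul_eq_right.mp (hσ h))

theorem tripleColour_mul_thd_ne (hg : g ≠ 1) :
    tripleColour σ (x, y, g * z) ≠ tripleColour σ (x, y, z) := by
  intro h
  simp only [tripleColour, mul_right_inj, mul_eq_right] at h
  exact hg h

theorem tripleColour_mul_fst_snd_ne (hg : g ≠ 1) (hσ : Injective fun y => y⁻¹ * σ y) :
    tripleColour σ (g * x, g * y, z) ≠ tripleColour σ (x, y, z) := by
  intro h
  rw [tripleColour_eq_mul_mul_sigma, tripleColour_eq_mul_mul_sigma,
    mul_inv_mul_mul_left] at h
  exact hg (mul_eq_right.mp (hσ (mul_left_cancel (mul_right_cancel h))))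

theorem tripleColour_mul_snd_thd_ne (hg : g ≠ 1) (hσ : Injective fun y => σ y * y) :
    tripleColour σ (x, g * y, g * z) ≠ tripleColour σ (x, y, z) := by
  intro h
  rw [tripleColour_eq_mul_sigma_mul, tripleColour_eq_mul_sigma_mul,
    mul_inv_mul_mul_left] at h
  exact hg (mul_eq_right.mp (hσ (mul_left_cancel (mul_right_cancel h))))

theorem tripleColour_mul_diag_ne (hg : g ≠ 1) (hσ : Injective fun y => y⁻¹ * σ y * y) :
    tripleColour σ (g * x, g * y, g * z) ≠ tripleColour σ (x, y, z) := by
  intro h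
  rw [tripleColour_eq_mul_conj_sigma, tripleColour_eq_mul_conj_sigma,
    mul_inv_mul_mul_left, mul_inv_mul_mul_left] at h
  exact hg (mul_eq_right.mp (hσ (mul_left_cancel (mul_right_cancel h))))

theorem IsColouringBijection.tripleColour_mul_ne (hσ : IsColouringBijection σ)
    {s : G × G × G} (hs : s ∈ connS3 G) (v : G × G × G) :
    tripleColour σ (s * v) ≠ tripleColour σ v := by
  obtain ⟨hσ, hf, hh, hk⟩ := hσ
  obtain ⟨x, y, z⟩ := v
  obtain ⟨g, hg, rfl | rfl | rfl | rfl | rfl | rfl⟩ := hs <;>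
    simp only [Prod.mk_mul_mk, one_mul]
  · exact tripleColour_mul_fst_ne x y z hg
  · exact tripleColour_mul_snd_ne x y z hg hσ.injective
  · exact tripleColour_mul_thd_ne x y z hg
  · exact tripleColour_mul_fst_snd_ne x y z hg hh.injective
  · exact tripleColour_mul_snd_thd_ne x y z hg hf.injective
  · exact tripleColour_mul_diag_ne x y z hg hk.injective

end TripleColour

theorem colouring_bijection_gives_proper_colouring_general
    {G : Type*} [Group G] (σ : G → G)
    (hσ : IsColouringBijection σ) :
    ∀ u v : G × G × G, (cayley3 G).Adj u v →
      u.1⁻¹ * σ u.2.1 * u.2.2 ≠ v.1⁻¹ * σ v.2.1 * v.2.2 := by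
  rintro u v ⟨-, hs⟩
  have h := hσ.tripleColour_mul_ne hs v
  rwa [inv_mul_cancel_right] at h

/-- Proposition 1 (chromatic): if a finite group `G` admits a colouring bijection `σ`,
then `c(x,y,z) = x⁻¹ σ(y) z` is a proper `|G|`-colouring of `𝒢₃(G)`. -/
theorem colouring_bijection_gives_proper_colouring
    {G : Type*} [Group G] [Fintype G] (σ : G → G)
    (hσ : IsColouringBijection σ) :
    ∀ u v : G × G × G, (cayley3 G).Adj u v →
      u.1⁻¹ * σ u.2.1 * u.2.2 ≠ v.1⁻¹ * σ v.2.1 * v.2.2 :=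
  colouring_bijection_gives_proper_colouring_general σ hσ
end

section
/- Let G be a finite group. If G admits a colouring bijection, then G admits a strong complete mapping; moreover, if σ is a colouring bijection of G, then τ = σ⁻¹ is a strong complete mapping such that the map x ↦ τ(x)⁻¹·x·τ(x) is also a bijection of G. -/
/-- A bijection `τ : G → G` is a *strong complete mapping* if the maps
`x ↦ x·τ(x)` and `x ↦ x⁻¹·τ(x)` are both bijections of `G`. -/
def IsStrongCompleteMapping {G : Type*} [Group G] (τ : G → G) : Prop :=
  Function.Bijective τ ∧
    Function.Bijective (fun x => x * τ x) ∧
    Function.Bijective (fun x => x⁻¹ * τ x)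

/-- Proposition 2(2): if `σ` is a colouring bijection of a finite group `G`, then `G`
admits a strong complete mapping; more precisely, `τ = σ⁻¹` is a strong complete mapping
such that `x ↦ τ(x)⁻¹·x·τ(x)` is also a bijection of `G`. -/
theorem colourable_implies_strongly_admissible
    {G : Type*} [Group G] [Fintype G] (σ : Equiv.Perm G)
    (hσ : IsColouringBijection (σ : G → G)) :
    (∃ τ : G → G, IsStrongCompleteMapping τ) ∧
      IsStrongCompleteMapping (σ.symm : G → G) ∧
      Function.Bijective (fun x => (σ.symm x)⁻¹ * x * σ.symm x) := by
  obtain ⟨hb, h1, h2, h3⟩ := hσ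
  have key : ∀ g : G → G, Function.Bijective (g ∘ σ) → Function.Bijective g :=
    fun g h => (Function.Bijective.of_comp_iff g σ.bijective).mp h
  have hA : Function.Bijective (fun y => y * σ.symm y) := by
    apply key
    have : (fun y => y * σ.symm y) ∘ σ = fun x => σ x * x := by
      funext x; simp
    rw [this]; exact h1
  have hB : Function.Bijective (fun y : G => y⁻¹ * σ.symm y) := by
    apply key
    have : (fun y : G => y⁻¹ * σ.symm y) ∘ σ = fun x => (σ x)⁻¹ * x := by
      funext x; simp
    rw [this]
    have : (fun x : G => (σ x)⁻¹ * x) = (fun z : G => z⁻¹) ∘ fun x => x⁻¹ * σ x := by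
      funext x; simp [mul_comm]
    rw [this]
    exact (Equiv.inv G).bijective.comp h2
  have hC : Function.Bijective (fun y : G => (σ.symm y)⁻¹ * y * σ.symm y) := by
    apply key
    have : (fun y : G => (σ.symm y)⁻¹ * y * σ.symm y) ∘ σ = fun x => x⁻¹ * σ x * x := by
      funext x; simp
    rw [this]; exact h3
  exact ⟨⟨σ.symm, σ.symm.bijective, hA, hB⟩, ⟨σ.symm.bijective, hA, hB⟩, hC⟩
end

section
/- Let G be a finite group whose order is divisible by neither 2 nor 3. Then the map σ : G → G given by σ(x) = x² is a colouring bijection of G; in particular, G is colourable. -/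
/-- If the order of a finite group `G` is divisible by neither `2` nor `3`, then
`σ(x) = x²` is a colouring bijection of `G`; in particular `G` is colourable. -/
theorem squaring_is_colouring_bijection
    {G : Type*} [Group G] [Fintype G]
    (h2 : ¬ (2 ∣ Fintype.card G)) (h3 : ¬ (3 ∣ Fintype.card G)) :
    IsColouringBijection (fun x : G => x ^ 2) ∧
      ∃ σ : G → G, IsColouringBijection σ := by
  have hcard : Nat.card G = Fintype.card G := Nat.card_eq_fintype_card
  have c2 : (Nat.card G).Coprime 2 := by
    rw [hcard]
    rcases Nat.coprime_or_dvd_of_prime Nat.prime_two (Fintype.card G) with h | h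
    · exact h.symm
    · exact absurd h h2
  have c3 : (Nat.card G).Coprime 3 := by
    rw [hcard]
    rcases Nat.coprime_or_dvd_of_prime (by norm_num : Nat.Prime 3) (Fintype.card G) with h | h
    · exact h.symm
    · exact absurd h h3
  have b2 : Function.Bijective (fun x : G => x ^ 2) := (powCoprime c2).bijective
  have b3 : Function.Bijective (fun x : G => x ^ 3) := (powCoprime c3).bijective
  have key : IsColouringBijection (fun x : G => x ^ 2) := by
    refine ⟨b2, ?_, ?_, ?_⟩
    · have : (fun x : G => x ^ 2 * x) = fun x : G => x ^ 3 := by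
        funext x; rw [← pow_succ]
      rw [this]; exact b3
    · have : (fun x : G => x⁻¹ * x ^ 2) = fun x : G => x := by
        funext x; rw [pow_two, inv_mul_cancel_left]
      rw [this]; exact Function.bijective_id
    · have : (fun x : G => x⁻¹ * x ^ 2 * x) = fun x : G => x ^ 2 := by
        funext x; rw [pow_two, inv_mul_cancel_left, ← pow_two]
      rw [this]; exact b2
  exact ⟨key, _, key⟩
end

section
/- Let G be a finite group and let H be a subgroup of G contained in the centre Z(G). If the quotient group G/H admits a colouring bijection and H admits a colouring bijection, then G admits a colouring bijection. -/
section Aux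

variable {G : Type*} [Group G] (H : Subgroup G)

/-- A set-theoretic section of the quotient map. -/
noncomputable def clbSec (q : G ⧸ H) : G := q.out

lemma clbSec_mk (q : G ⧸ H) : (QuotientGroup.mk (clbSec H q) : G ⧸ H) = q :=
  Quotient.out_eq q

lemma clbMem (g : G) : (clbSec H (QuotientGroup.mk g))⁻¹ * g ∈ H := by
  rw [← QuotientGroup.eq]
  exact clbSec_mk H _

/-- The `H`-part of `g` relative to the section. -/
noncomputable def clbH (g : G) : H := ⟨(clbSec H (QuotientGroup.mk g))⁻¹ * g, clbMem H g⟩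

lemma clbH_spec (g : G) : clbSec H (QuotientGroup.mk g) * (clbH H g : G) = g := by
  simp [clbH]

variable [H.Normal]

lemma clb_mk (q : G ⧸ H) (h : H) :
    (QuotientGroup.mk (clbSec H q * (h : G)) : G ⧸ H) = q := by
  rw [QuotientGroup.mk_mul, clbSec_mk, (QuotientGroup.eq_one_iff (h : G)).mpr h.2, mul_one]

lemma clbH_mul (q : G ⧸ H) (h : H) : clbH H (clbSec H q * (h : G)) = h := by
  ext
  simp [clbH, clb_mk, clbSec_mk, inv_mul_cancel_left]

/-- Key injectivity lemma: a map of the form `g ↦ u (π g) * c (h g)` with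
`π ∘ u` injective on the quotient and `c` injective on `H` is injective. -/
lemma clbKey (u : G ⧸ H → G)
    (hu : Function.Injective fun q => (QuotientGroup.mk (u q) : G ⧸ H))
    (c : H → H) (hc : Function.Injective c) :
    Function.Injective fun g => u (QuotientGroup.mk g) * (c (clbH H g) : G) := by
  intro g₁ g₂ h
  have h' : u (QuotientGroup.mk g₁) * (c (clbH H g₁) : G)
      = u (QuotientGroup.mk g₂) * (c (clbH H g₂) : G) := h
  have hq : (QuotientGroup.mk g₁ : G ⧸ H) = QuotientGroup.mk g₂ := by
    apply hu
    have := congrArg (QuotientGroup.mk (s := H)) h'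
    simpa [QuotientGroup.mk_mul, (QuotientGroup.eq_one_iff _).mpr (c _).2] using this
  rw [hq] at h'
  have hH' : clbH H g₁ = clbH H g₂ := hc (Subtype.ext (mul_left_cancel h'))
  have hspec := clbH_spec H g₁
  rw [hq, hH', clbH_spec H g₂] at hspec
  exact hspec.symm

end Aux

/-- Lemma (central lifting): let `G` be a finite group and `H ≤ Z(G)` a central
subgroup.  If `G/H` admits a colouring bijection and `H` admits a colouring
bijection, then `G` admits a colouring bijection. -/
theorem central_lifting
    {G : Type*} [Group G] [Fintype G] (H : Subgroup G) [H.Normal]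
    (hH : H ≤ Subgroup.center G)
    (hquot : ∃ Φ : G ⧸ H → G ⧸ H, IsColouringBijection Φ)
    (hsub : ∃ ψ : H → H, IsColouringBijection ψ) :
    ∃ σ : G → G, IsColouringBijection σ := by
  classical
  obtain ⟨Φ, hΦ⟩ := hquot
  obtain ⟨ψ, hψ⟩ := hsub
  -- central elements of H commute with everything
  have hcomm : ∀ (h : H) (a : G), (h : G) * a = a * (h : G) := by
    intro h a
    exact (Subgroup.mem_center_iff.mp (hH h.2) a).symm
  have hcomm' : ∀ (h : H) (a : G), (h : G)⁻¹ * a = a * (h : G)⁻¹ := by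
    intro h a
    have := hcomm h⁻¹ a
    simpa using this
  -- the colouring bijection on G
  refine ⟨fun g => clbSec H (Φ (QuotientGroup.mk g)) * (ψ (clbH H g) : G), ?_, ?_, ?_, ?_⟩
  · -- σ itself
    rw [Finite.injective_iff_bijective.symm]
    apply clbKey H (fun q => clbSec H (Φ q)) ?_ ψ hψ.1.injective
    have : (fun q => (QuotientGroup.mk (clbSec H (Φ q)) : G ⧸ H)) = Φ := by
      funext q; exact clbSec_mk H _
    rw [this]; exact hΦ.1.injective
  · -- x ↦ σ x * x
    rw [Finite.injective_iff_bijective.symm]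
    have heq : (fun g => (clbSec H (Φ (QuotientGroup.mk g)) * (ψ (clbH H g) : G)) * g) =
        fun g => (clbSec H (Φ (QuotientGroup.mk g)) * clbSec H (QuotientGroup.mk g)) *
          ((ψ (clbH H g) * clbH H g : H) : G) := by
      funext g
      set q := (QuotientGroup.mk g : G ⧸ H) with hqdef
      set h0 := clbH H g with hh0def
      have hg : g = clbSec H q * (h0 : G) := (clbH_spec H g).symm
      push_cast
      calc clbSec H (Φ q) * (ψ h0 : G) * g
          = clbSec H (Φ q) * ((ψ h0 : G) * clbSec H q) * (h0 : G) := by rw [hg]; group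
        _ = clbSec H (Φ q) * (clbSec H q * (ψ h0 : G)) * (h0 : G) := by rw [hcomm]
        _ = clbSec H (Φ q) * clbSec H q * ((ψ h0 : G) * (h0 : G)) := by group
    rw [heq]
    apply clbKey H (fun q => clbSec H (Φ q) * clbSec H q) ?_ (fun h => ψ h * h)
      hψ.2.1.injective
    have : (fun q => (QuotientGroup.mk (clbSec H (Φ q) * clbSec H q) : G ⧸ H)) =
        fun q => Φ q * q := by
      funext q; simp [QuotientGroup.mk_mul, clbSec_mk]
    rw [this]; exact hΦ.2.1.injective
  · -- x ↦ x⁻¹ * σ x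
    rw [Finite.injective_iff_bijective.symm]
    have heq : (fun g => g⁻¹ * (clbSec H (Φ (QuotientGroup.mk g)) * (ψ (clbH H g) : G))) =
        fun g => ((clbSec H (QuotientGroup.mk g))⁻¹ * clbSec H (Φ (QuotientGroup.mk g))) *
          (((clbH H g)⁻¹ * ψ (clbH H g) : H) : G) := by
      funext g
      set q := (QuotientGroup.mk g : G ⧸ H) with hqdef
      set h0 := clbH H g with hh0def
      have hg : g = clbSec H q * (h0 : G) := (clbH_spec H g).symm
      push_cast
      calc g⁻¹ * (clbSec H (Φ q) * (ψ h0 : G))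
          = (h0 : G)⁻¹ * ((clbSec H q)⁻¹ * clbSec H (Φ q)) * (ψ h0 : G) := by
            rw [hg]; group
        _ = ((clbSec H q)⁻¹ * clbSec H (Φ q)) * (h0 : G)⁻¹ * (ψ h0 : G) := by rw [hcomm']
        _ = ((clbSec H q)⁻¹ * clbSec H (Φ q)) * ((h0 : G)⁻¹ * (ψ h0 : G)) := by group
    rw [heq]
    apply clbKey H (fun q => (clbSec H q)⁻¹ * clbSec H (Φ q)) ?_ (fun h => h⁻¹ * ψ h)
      hψ.2.2.1.injective
    have : (fun q => (QuotientGroup.mk ((clbSec H q)⁻¹ * clbSec H (Φ q)) : G ⧸ H)) =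
        fun q => q⁻¹ * Φ q := by
      funext q; simp [QuotientGroup.mk_mul, clbSec_mk]
    rw [this]; exact hΦ.2.2.1.injective
  · -- x ↦ x⁻¹ * σ x * x
    rw [Finite.injective_iff_bijective.symm]
    have heq : (fun g => g⁻¹ * (clbSec H (Φ (QuotientGroup.mk g)) * (ψ (clbH H g) : G)) * g) =
        fun g => ((clbSec H (QuotientGroup.mk g))⁻¹ * clbSec H (Φ (QuotientGroup.mk g)) *
            clbSec H (QuotientGroup.mk g)) *
          (((clbH H g)⁻¹ * ψ (clbH H g) * clbH H g : H) : G) := by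
      funext g
      set q := (QuotientGroup.mk g : G ⧸ H) with hqdef
      set h0 := clbH H g with hh0def
      have hg : g = clbSec H q * (h0 : G) := (clbH_spec H g).symm
      push_cast
      calc g⁻¹ * (clbSec H (Φ q) * (ψ h0 : G)) * g
          = (h0 : G)⁻¹ * ((clbSec H q)⁻¹ * clbSec H (Φ q) *
              ((ψ h0 : G) * clbSec H q)) * (h0 : G) := by rw [hg]; group
        _ = (h0 : G)⁻¹ * ((clbSec H q)⁻¹ * clbSec H (Φ q) *
              (clbSec H q * (ψ h0 : G))) * (h0 : G) := by rw [hcomm]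
        _ = (h0 : G)⁻¹ * ((clbSec H q)⁻¹ * clbSec H (Φ q) * clbSec H q) *
              ((ψ h0 : G) * (h0 : G)) := by group
        _ = ((clbSec H q)⁻¹ * clbSec H (Φ q) * clbSec H q) * (h0 : G)⁻¹ *
              ((ψ h0 : G) * (h0 : G)) := by rw [hcomm']
        _ = ((clbSec H q)⁻¹ * clbSec H (Φ q) * clbSec H q) *
              ((h0 : G)⁻¹ * (ψ h0 : G) * (h0 : G)) := by group
    rw [heq]
    apply clbKey H (fun q => (clbSec H q)⁻¹ * clbSec H (Φ q) * clbSec H q) ?_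
      (fun h => h⁻¹ * ψ h * h) hψ.2.2.2.injective
    have : (fun q => (QuotientGroup.mk ((clbSec H q)⁻¹ * clbSec H (Φ q) * clbSec H q)
        : G ⧸ H)) = fun q => q⁻¹ * Φ q * q := by
      funext q; simp [QuotientGroup.mk_mul, clbSec_mk]
    rw [this]; exact hΦ.2.2.2.injective
end

section
/- The Heisenberg group H₃ of order 27, i.e. the group of upper unitriangular 3×3 matrices over the field with 3 elements (equivalently, the group ⟨x,y,z | x³ = y³ = z³ = 1, xz = zx, yz = zy, xy = zyx⟩), admits a colouring bijection. -/
/-- The Heisenberg group of order 27: elements `x^i y^j z^k` (`i,j,k ∈ ℤ/3ℤ`),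
i.e. upper unitriangular `3×3` matrices over `𝔽₃`, with multiplication
`(i,j,k)·(r,s,t) = (i+r, j+s, k+t+i·s)`. -/
@[ext]
structure Heis3 : Type where
  x : ZMod 3
  y : ZMod 3
  z : ZMod 3

namespace Heis3

instance : Mul Heis3 :=
  ⟨fun a b => ⟨a.x + b.x, a.y + b.y, a.z + b.z + a.x * b.y⟩⟩

instance : One Heis3 := ⟨⟨0, 0, 0⟩⟩

instance : Inv Heis3 :=
  ⟨fun a => ⟨-a.x, -a.y, -a.z + a.x * a.y⟩⟩

@[simp] lemma mul_x (a b : Heis3) : (a * b).x = a.x + b.x := rfl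
@[simp] lemma mul_y (a b : Heis3) : (a * b).y = a.y + b.y := rfl
@[simp] lemma mul_z (a b : Heis3) : (a * b).z = a.z + b.z + a.x * b.y := rfl
@[simp] lemma one_x : (1 : Heis3).x = 0 := rfl
@[simp] lemma one_y : (1 : Heis3).y = 0 := rfl
@[simp] lemma one_z : (1 : Heis3).z = 0 := rfl
@[simp] lemma inv_x (a : Heis3) : a⁻¹.x = -a.x := rfl
@[simp] lemma inv_y (a : Heis3) : a⁻¹.y = -a.y := rfl
@[simp] lemma inv_z (a : Heis3) : a⁻¹.z = -a.z + a.x * a.y := rfl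

instance : Group Heis3 where
  mul_assoc a b c := by ext <;> simp <;> ring
  one_mul a := by ext <;> simp
  mul_one a := by ext <;> simp
  inv_mul_cancel a := by ext <;> simp

end Heis3


namespace Heis3

def toProd (a : Heis3) : ZMod 3 × ZMod 3 × ZMod 3 := (a.x, a.y, a.z)

def equivProd : Heis3 ≃ ZMod 3 × ZMod 3 × ZMod 3 where
  toFun := toProd
  invFun p := ⟨p.1, p.2.1, p.2.2⟩
  left_inv _ := rfl
  right_inv _ := rfl

instance : DecidableEq Heis3 := equivProd.decidableEq
instance : Fintype Heis3 := Fintype.ofEquiv _ equivProd.symm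

def tbl : Fin 3 → Fin 3 → Fin 3 → Heis3 :=
  ![
  ![
    ![⟨1,0,2⟩, ⟨0,2,1⟩, ⟨2,1,2⟩],
    ![⟨2,0,1⟩, ⟨0,1,0⟩, ⟨1,2,1⟩],
    ![⟨2,2,1⟩, ⟨0,0,2⟩, ⟨1,1,2⟩]],
  ![
    ![⟨2,1,1⟩, ⟨0,2,2⟩, ⟨1,0,0⟩],
    ![⟨0,1,2⟩, ⟨1,2,2⟩, ⟨2,0,2⟩],
    ![⟨1,1,1⟩, ⟨0,0,0⟩, ⟨2,2,2⟩]],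
  ![
    ![⟨0,2,0⟩, ⟨1,0,1⟩, ⟨2,1,0⟩],
    ![⟨0,1,1⟩, ⟨2,0,0⟩, ⟨1,2,0⟩],
    ![⟨2,2,0⟩, ⟨0,0,1⟩, ⟨1,1,0⟩]]]

def sigma (g : Heis3) : Heis3 := tbl ⟨g.x.val, g.x.val_lt⟩ ⟨g.y.val, g.y.val_lt⟩ ⟨g.z.val, g.z.val_lt⟩

end Heis3

set_option maxHeartbeats 4000000 in
/-- The Heisenberg group of order 27 admits a colouring bijection. -/
theorem heisenberg_admits_colouring_bijection :
    ∃ σ : Heis3 → Heis3, IsColouringBijection σ := by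
  exact ⟨Heis3.sigma, by decide, by decide, by decide, by decide⟩
end

section
/- Let G be a finite 3-group (a group whose order is a power of 3) with a normal subgroup H = ⟨c⟩ × ⟨b⟩ (internal direct product of the cyclic subgroups generated by c and b), where c ∈ Z(G) and b has order 3^k for some k ≥ 1. Then for every t ∈ G there exist integers m(t) with 0 ≤ m(t) < 3^{k-1} and l(t) such that t·b·t⁻¹ = b^{1+3·m(t)}·c^{l(t)}. If moreover c has order 3, then l(t) may be taken in {0,1,2}, and writing z = b³ one has t·b·t⁻¹ = b·z^{m(t)}·c^{l(t)}. -/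
open Pointwise


/-- Conjugation lemma: let `G` be a finite 3-group with a normal subgroup
`H = ⟨c⟩ × ⟨b⟩` (internal direct product), where `c ∈ Z(G)` and `b` has order `3^k`
(`k ≥ 1`).  Then for every `t ∈ G` there are integers `0 ≤ m(t) < 3^(k-1)` and `l(t)`
with `t·b·t⁻¹ = b^(1+3·m(t))·c^(l(t))`; if moreover `c` has order 3, then `l(t)` may be
taken in `{0,1,2}` and, writing `z = b³`, one has `t·b·t⁻¹ = b·z^(m(t))·c^(l(t))`. -/
theorem conjugation_lemma
    {G : Type*} [Group G] [Fintype G]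
    (hG : ∃ n : ℕ, Fintype.card G = 3 ^ n)
    (c b : G) (k : ℕ) (hk : 1 ≤ k)
    (hc : c ∈ Subgroup.center G)
    (hb : orderOf b = 3 ^ k)
    (H : Subgroup G) (hHn : H.Normal)
    (hH : H = Subgroup.zpowers c ⊔ Subgroup.zpowers b)
    (hdisj : Subgroup.zpowers c ⊓ Subgroup.zpowers b = ⊥) :
    (∀ t : G, ∃ (m : ℕ) (l : ℤ), m < 3 ^ (k - 1) ∧
        t * b * t⁻¹ = b ^ (1 + 3 * m) * c ^ l) ∧
    (orderOf c = 3 → ∀ t : G, ∃ m l : ℕ, m < 3 ^ (k - 1) ∧ l < 3 ∧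
        t * b * t⁻¹ = b * (b ^ 3) ^ m * c ^ l) := by
  obtain ⟨n, hn⟩ := hG
  have hcc : ∀ g : G, g * c = c * g := Subgroup.mem_center_iff.mp hc
  have hcomm : ∀ g : G, Commute c g := fun g => (hcc g).symm
  haveI hNc : (Subgroup.zpowers c).Normal := by
    constructor
    intro x hx g
    obtain ⟨i, rfl⟩ := Subgroup.mem_zpowers_iff.mp hx
    have : g * c ^ i * g⁻¹ = c ^ i := by
      have h := ((hcomm g).zpow_left i).eq
      rw [← h, mul_assoc, mul_inv_cancel, mul_one]
    rw [this]; exact hx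
  have main : ∀ t : G, ∃ (m : ℕ) (l : ℤ), m < 3 ^ (k - 1) ∧
      t * b * t⁻¹ = b ^ (1 + 3 * m) * c ^ l := by
    intro t
    -- decompose the conjugate in H
    have hbH : b ∈ H := by
      rw [hH]; exact Subgroup.mem_sup_right (Subgroup.mem_zpowers b)
    have htbt : t * b * t⁻¹ ∈ H := hHn.conj_mem b hbH t
    rw [hH] at htbt
    have hmem : t * b * t⁻¹ ∈ (Subgroup.zpowers c : Set G) * (Subgroup.zpowers b : Set G) := by
      rw [← Subgroup.normal_mul]; exact htbt
    obtain ⟨x, hx, y, hy, hxy⟩ := hmem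
    obtain ⟨i, rfl⟩ := Subgroup.mem_zpowers_iff.mp hx
    obtain ⟨j, rfl⟩ := Subgroup.mem_zpowers_iff.mp hy
    have heq : t * b * t⁻¹ = b ^ j * c ^ i := by
      rw [← hxy]; exact (((hcomm (b ^ j)).zpow_left i).eq)
    -- iterate conjugation
    have claim : ∀ r : ℕ, ∃ e : ℤ, t ^ r * b * (t ^ r)⁻¹ = b ^ (j ^ r) * c ^ e := by
      intro r
      induction r with
      | zero => exact ⟨0, by simp⟩
      | succ r ih =>
        obtain ⟨e, he⟩ := ih
        refine ⟨i * j ^ r + e, ?_⟩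
        have h1 : t ^ (r + 1) * b * (t ^ (r + 1))⁻¹
            = t * (t ^ r * b * (t ^ r)⁻¹) * t⁻¹ := by
          rw [pow_succ']; group
        rw [h1, he]
        have h2 : t * (b ^ j ^ r * c ^ e) * t⁻¹
            = (t * b * t⁻¹) ^ (j ^ r) * (t * c ^ e * t⁻¹) := by
          have hz := map_zpow (MulAut.conj t) b (j ^ r)
          have hm := map_mul (MulAut.conj t) (b ^ j ^ r) (c ^ e)
          simp only [MulAut.conj_apply] at hz hm
          rw [hm, ← hz]
        have h3 : t * c ^ e * t⁻¹ = c ^ e := by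
          have h := ((hcomm t).zpow_left e).eq
          rw [← h, mul_assoc, mul_inv_cancel, mul_one]
        rw [h2, h3, heq, ((hcomm (b ^ j)).zpow_left i).symm.mul_zpow (j ^ r)]
        rw [← zpow_mul, ← zpow_mul, zpow_add c, pow_succ j r, mul_comm j (j ^ r), mul_assoc]
    -- the order of t is a power of 3
    have hdvd : orderOf t ∣ 3 ^ n := hn ▸ orderOf_dvd_card
    obtain ⟨s, _, hs⟩ := (Nat.dvd_prime_pow Nat.prime_three).mp hdvd
    obtain ⟨e, he⟩ := claim (orderOf t)
    rw [pow_orderOf_eq_one, one_mul, inv_one, mul_one] at he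
    -- b^(j^ord - 1) = c^(-e) lies in the trivial intersection
    have hkey : b ^ (j ^ orderOf t - 1) = 1 := by
      have h4 : b ^ (j ^ orderOf t - 1) = c ^ (-e) := by
        have h5 : b ^ (j ^ orderOf t) = b * (c ^ e)⁻¹ := eq_mul_inv_of_mul_eq he.symm
        have hcm : b * (c ^ e)⁻¹ = (c ^ e)⁻¹ * b := (((hcomm b).zpow_left e).inv_left).eq.symm
        rw [zpow_sub, zpow_one, h5, hcm, zpow_neg, mul_assoc, mul_inv_cancel, mul_one]
      have : b ^ (j ^ orderOf t - 1) ∈ Subgroup.zpowers c ⊓ Subgroup.zpowers b := by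
        constructor
        · rw [h4]; exact Subgroup.mem_zpowers_iff.mpr ⟨-e, rfl⟩
        · exact Subgroup.mem_zpowers_iff.mpr ⟨_, rfl⟩
      rw [hdisj] at this
      exact this
    have hdvd2 : ((3 : ℤ) ^ k) ∣ j ^ orderOf t - 1 := by
      have := orderOf_dvd_iff_zpow_eq_one.mpr hkey
      rw [hb] at this
      exact_mod_cast this
    -- deduce j ≡ 1 mod 3
    have h3dvd : (3 : ℤ) ∣ j ^ orderOf t - 1 :=
      dvd_trans (dvd_pow_self 3 (by omega)) hdvd2
    haveI : Fact (Nat.Prime 3) := ⟨Nat.prime_three⟩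
    have hzmod : ((j : ZMod 3)) ^ orderOf t = 1 := by
      have := (ZMod.intCast_zmod_eq_zero_iff_dvd (j ^ orderOf t - 1) 3).mpr h3dvd
      push_cast at this
      linear_combination this
    have hpowfix : ∀ (x : ZMod 3) (r : ℕ), x ^ (3 ^ r) = x := by
      intro x r
      induction r with
      | zero => simp
      | succ r ih => rw [pow_succ, pow_mul, ih, ZMod.pow_card]
    have hj1 : (j : ZMod 3) = 1 := by
      rw [← hpowfix (j : ZMod 3) s, ← hs, hzmod]
    have hj1' : (3 : ℤ) ∣ j - 1 := by
      have := (ZMod.intCast_zmod_eq_zero_iff_dvd (j - 1) 3).mp (by push_cast [hj1]; ring)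
      exact this
    -- reduce j mod 3^k
    set N : ℤ := (3 : ℤ) ^ k with hN
    have hNpos : 0 < N := by positivity
    set rem : ℤ := j % N with hrem
    have hb1 : b ^ j = b ^ rem := by
      conv_lhs => rw [← Int.mul_ediv_add_emod j N]
      rw [zpow_add, zpow_mul, ← hrem]
      have : b ^ N = 1 := by
        rw [hN, show ((3:ℤ)^k) = ((3^k : ℕ) : ℤ) by push_cast; ring, zpow_natCast,
          ← hb, pow_orderOf_eq_one]
      rw [this, one_zpow, one_mul]
    have hrem0 : 0 ≤ rem := Int.emod_nonneg j (by omega)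
    have hremlt : rem < N := Int.emod_lt_of_pos j hNpos
    have hdvdNrem : (3 : ℤ) ∣ j - rem := by
      have : N ∣ j - rem := Int.dvd_self_sub_of_emod_eq rfl
      exact dvd_trans (dvd_pow_self 3 (by omega)) this
    have hrem1 : (3 : ℤ) ∣ rem - 1 := by
      have : j - 1 - (j - rem) = rem - 1 := by ring
      omega
    obtain ⟨d, hd⟩ := hrem1
    have hd0 : 0 ≤ d := by omega
    have hdlt : d < (3 : ℤ) ^ (k - 1) := by
      have h3k : N = 3 * 3 ^ (k - 1) := by
        rw [hN, ← pow_succ']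
        congr 1
        omega
      have hP : (0:ℤ) < 3 ^ (k-1) := by positivity
      omega
    refine ⟨d.toNat, i, ?_, ?_⟩
    · have : ((d.toNat : ℤ)) < ((3 ^ (k-1) : ℕ) : ℤ) := by
        push_cast
        omega
      exact_mod_cast this
    · rw [heq, hb1]
      congr 1
      have : rem = 1 + 3 * d := by omega
      rw [this, ← zpow_natCast b (1 + 3 * d.toNat)]
      congr 1
      push_cast
      omega
  refine ⟨main, ?_⟩
  intro hoc t
  obtain ⟨m, l, hm, heq⟩ := main t
  have hc1 : c ^ l = c ^ (l % 3) := by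
    conv_lhs => rw [← Int.mul_ediv_add_emod l 3]
    rw [zpow_add, zpow_mul]
    have : c ^ (3:ℤ) = 1 := by
      rw [show ((3:ℤ)) = ((3 : ℕ) : ℤ) by norm_num, zpow_natCast, ← hoc, pow_orderOf_eq_one]
    rw [this, one_zpow, one_mul]
  have hl0 : 0 ≤ l % 3 := Int.emod_nonneg l (by norm_num)
  have hl3 : l % 3 < 3 := Int.emod_lt_of_pos l (by norm_num)
  refine ⟨m, (l % 3).toNat, hm, by omega, ?_⟩
  rw [heq, hc1]
  congr 1
  · rw [pow_add, pow_mul, pow_one]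
  · rw [← zpow_natCast c (l % 3).toNat]
    congr 1
    omega
end

section
/- Let G be a finite 3-group with a normal subgroup H isomorphic to C₃ × C₃. If the quotient group G/H admits a colouring bijection, then G admits a colouring bijection. -/
private abbrev V3 := ZMod 3 × ZMod 3

private def Lmap (a b v : V3) : V3 := (v.1*a.1 + v.2*b.1, v.1*a.2 + v.2*b.2)

private lemma lmap_decomp (ψ : V3 → V3) (hadd : ∀ u w, ψ (u + w) = ψ u + ψ w) :
    ψ = Lmap (ψ (1,0)) (ψ (0,1)) := by
  have h0 : ψ 0 = 0 := by
    have h := hadd 0 0; simpa using h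
  funext v
  obtain ⟨x, y⟩ := v
  have hx : ∀ z : ZMod 3, z = 0 ∨ z = 1 ∨ z = 2 := by decide
  rcases hx x with h | h | h <;> rcases hx y with h' | h' | h' <;> subst h <;> subst h' <;>
    [ (show ψ (0,0) = _; rw [show ((0:ZMod 3),(0:ZMod 3)) = 0 from rfl, h0]);
      skip; (rw [show ((0:ZMod 3),(2:ZMod 3)) = (0,1)+(0,1) by decide, hadd]);
      skip;
      (rw [show ((1:ZMod 3),(1:ZMod 3)) = (1,0)+(0,1) by decide, hadd]);
      (rw [show ((1:ZMod 3),(2:ZMod 3)) = (1,0)+((0,1)+(0,1)) by decide, hadd, hadd]);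
      (rw [show ((2:ZMod 3),(0:ZMod 3)) = (1,0)+(1,0) by decide, hadd]);
      (rw [show ((2:ZMod 3),(1:ZMod 3)) = (1,0)+((1,0)+(0,1)) by decide, hadd, hadd]);
      (rw [show ((2:ZMod 3),(2:ZMod 3)) = (1,0)+((1,0)+((0,1)+(0,1))) by decide, hadd, hadd, hadd])] <;>
    simp [Lmap, Prod.ext_iff] <;> constructor <;> ring

private lemma key1 : ∀ a b : V3, (∀ v, (Lmap a b)^[9] v = v) → (∀ v, (Lmap a b)^[3] v = v) := by
  decide

private lemma key1' (ψ : V3 → V3) (hadd : ∀ u w, ψ (u + w) = ψ u + ψ w)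
    (h9 : ∀ v, ψ^[9] v = v) : ∀ v, ψ^[3] v = v := by
  have hψ := lmap_decomp ψ hadd
  rw [hψ] at h9 ⊢
  exact key1 _ _ h9

private lemma iter_add (ψ : V3 → V3) (hadd : ∀ u w, ψ (u + w) = ψ u + ψ w) (k : ℕ) :
    ∀ u w, ψ^[k] (u + w) = ψ^[k] u + ψ^[k] w := by
  induction k with
  | zero => simp
  | succ n ih => intro u w; rw [Function.iterate_succ_apply', Function.iterate_succ_apply',
      Function.iterate_succ_apply', ih u w, hadd]

private lemma pow_red (m : ℕ) (ψ : V3 → V3) (hadd : ∀ u w, ψ (u + w) = ψ u + ψ w)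
    (h : ∀ v, ψ^[3^m] v = v) : ∀ v, ψ^[3] v = v := by
  induction m generalizing ψ with
  | zero =>
      intro v
      have h1 : ψ v = v := by simpa using h v
      exact Function.iterate_fixed h1 3
  | succ n ih =>
      have h' : ∀ v, (ψ^[3])^[3^n] v = v := by
        intro v
        rw [← Function.iterate_mul]
        have h3 : 3 * 3^n = 3^(n+1) := by ring
        rw [h3]; exact h v
      have h9 : ∀ v, ψ^[9] v = v := by
        have h2 := ih (ψ^[3]) (iter_add ψ hadd 3) h'
        intro v
        have h4 := h2 v
        rw [← Function.iterate_mul] at h4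
        simpa using h4
      exact key1' ψ hadd h9

set_option synthInstance.maxSize 1000 in
set_option synthInstance.maxHeartbeats 1000000 in
private lemma key2 : ∀ a b : V3, (∀ v, (Lmap a b)^[3] v = v) →
    ∃ c d : V3, Function.Bijective (Lmap c d) ∧
      Function.Bijective (fun v => Lmap c d v + Lmap a b v) ∧
      Function.Bijective (fun v => Lmap c d v - v) ∧
      Function.Bijective (fun v => Lmap c d v + Lmap a b v - v) := by decide

private lemma exists_f (ψ : V3 → V3) (hadd : ∀ u w, ψ (u + w) = ψ u + ψ w)
    (hcube : ∀ v, ψ^[3] v = v) :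
    ∃ f : V3 → V3, Function.Bijective f ∧
      Function.Bijective (fun v => f v + ψ v) ∧
      Function.Bijective (fun v => f v - v) ∧
      Function.Bijective (fun v => f v + ψ v - v) := by
  have hψ := lmap_decomp ψ hadd
  rw [hψ] at hcube ⊢
  obtain ⟨c, d, h1, h2, h3, h4⟩ := key2 _ _ hcube
  exact ⟨Lmap c d, h1, h2, h3, h4⟩

/-- Lifting along `C₃ × C₃`: let `G` be a finite 3-group with a normal subgroup
`H ≅ C₃ × C₃`.  If `G/H` admits a colouring bijection, then so does `G`. -/
theorem lift_C3xC3
    {G : Type*} [Group G] [Fintype G]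
    (hG : ∃ n : ℕ, Fintype.card G = 3 ^ n)
    (H : Subgroup G) [H.Normal]
    (hiso : Nonempty (H ≃* Multiplicative (ZMod 3 × ZMod 3)))
    (hquot : ∃ Φ : G ⧸ H → G ⧸ H, IsColouringBijection Φ) :
    ∃ σ : G → G, IsColouringBijection σ := by
  classical
  have hN : H.Normal := inferInstance
  obtain ⟨n, hcard⟩ := hG
  obtain ⟨e⟩ := hiso
  obtain ⟨Φ, hΦ0, hΦ1, hΦ2, hΦ3⟩ := hquot
  -- section of the quotient map
  set s : G ⧸ H → G := fun q => q.out with hs_def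
  have hs : ∀ q : G ⧸ H, ((s q : G) : G ⧸ H) = q := fun q => QuotientGroup.out_eq' q
  -- the coding of H by V3
  set c : V3 → G := fun v => ((e.symm (Multiplicative.ofAdd v) : H) : G) with hc_def
  have hcH : ∀ v, c v ∈ H := fun v => (e.symm (Multiplicative.ofAdd v)).2
  set tV : H → V3 := fun h => Multiplicative.toAdd (e h) with htV_def
  have htc : ∀ h : H, c (tV h) = (h : G) := by intro h; simp [hc_def, htV_def]
  have hcadd : ∀ v w, c (v + w) = c v * c w := by
    intro v w; simp [hc_def, ofAdd_add, map_mul]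
  have hcneg : ∀ v, c (-v) = (c v)⁻¹ := by
    intro v; simp [hc_def, ofAdd_neg, map_inv]
  have hcinj : Function.Injective c := by
    intro v w h
    have h1 : e.symm (Multiplicative.ofAdd v) = e.symm (Multiplicative.ofAdd w) :=
      Subtype.ext h
    have h2 := e.symm.injective h1
    exact Multiplicative.ofAdd.injective h2
  -- the conjugation action on V3
  have hconj : ∀ (g : G) (v : V3), g * c v * g⁻¹ ∈ H := fun g v => hN.conj_mem _ (hcH v) g
  set ψ : G → V3 → V3 := fun g v => tV ⟨g * c v * g⁻¹, hconj g v⟩ with hψ_def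
  have hψc : ∀ g v, c (ψ g v) = g * c v * g⁻¹ := fun g v => htc _
  have hψadd : ∀ g, ∀ u w, ψ g (u + w) = ψ g u + ψ g w := by
    intro g u w
    apply hcinj
    rw [hcadd, hψc, hψc, hψc, hcadd]
    group
  have hψinj : ∀ g, Function.Injective (ψ g) := by
    intro g v w h
    apply hcinj
    have h1 := congrArg c h
    rw [hψc, hψc] at h1
    have h2 : g * c v = g * c w := mul_right_cancel h1
    exact mul_left_cancel h2
  have hψiterc : ∀ (g : G) (k : ℕ) (v : V3), c ((ψ g)^[k] v) = g^k * c v * (g^k)⁻¹ := by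
    intro g k
    induction k with
    | zero => intro v; simp
    | succ m ih =>
        intro v
        rw [Function.iterate_succ_apply', hψc, ih]
        group
  have hψcube : ∀ g : G, ∀ v, (ψ g)^[3] v = v := by
    intro g
    apply pow_red n _ (hψadd g)
    intro v
    apply hcinj
    rw [hψiterc]
    have hg : g ^ (3^n) = 1 := by rw [← hcard]; exact pow_card_eq_one
    rw [hg]; group
  choose F hF1 hF2 hF3 hF4 using fun g : G => exists_f (ψ g) (hψadd g) (hψcube g)
  -- the H-coordinate of an element
  have hmem : ∀ x : G, x * (s ((x : G ⧸ H)))⁻¹ ∈ H := by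
    intro x
    have h1 : ((s ((x : G ⧸ H)) : G) : G ⧸ H) = (x : G ⧸ H) := hs _
    have h2 : (s ((x : G ⧸ H)))⁻¹ * x ∈ H := QuotientGroup.eq.mp h1
    exact hN.mem_comm h2
  set hV : G → V3 := fun x => tV ⟨x * (s ((x : G ⧸ H)))⁻¹, hmem x⟩ with hV_def
  have hchV : ∀ x : G, c (hV x) = x * (s ((x : G ⧸ H)))⁻¹ := fun x => htc _
  have hrec : ∀ x : G, c (hV x) * s ((x : G ⧸ H)) = x := by
    intro x; rw [hchV]; group
  have hπc : ∀ v, ((c v : G) : G ⧸ H) = 1 := fun v => (QuotientGroup.eq_one_iff _).mpr (hcH v)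
  have hπcs : ∀ (v : V3) (r : G ⧸ H), ((c v * s r : G) : G ⧸ H) = r := by
    intro v r
    rw [QuotientGroup.mk_mul, hπc, one_mul, hs]
  have hVcs : ∀ (v : V3) (r : G ⧸ H), hV (c v * s r) = v := by
    intro v r
    apply hcinj
    rw [hchV, hπcs, mul_inv_cancel_right]
  -- the main injectivity engine
  have main : ∀ (ρ : G ⧸ H → G ⧸ H) (A : G ⧸ H → V3 → V3) (T : G → G),
      Function.Injective ρ → (∀ q, Function.Injective (A q)) →
      (∀ x : G, T x = c (A (x : G ⧸ H) (hV x)) * s (ρ (x : G ⧸ H))) →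
      Function.Bijective T := by
    intro ρ A T hρ hA hT
    rw [← Finite.injective_iff_bijective]
    intro x y hxy
    rw [hT x, hT y] at hxy
    have h1 : ρ (x : G ⧸ H) = ρ (y : G ⧸ H) := by
      have h2 : ((c (A (x : G ⧸ H) (hV x)) * s (ρ (x : G ⧸ H)) : G) : G ⧸ H)
          = ((c (A (y : G ⧸ H) (hV y)) * s (ρ (y : G ⧸ H)) : G) : G ⧸ H) := congrArg _ hxy
      rwa [hπcs, hπcs] at h2
    have hq : (x : G ⧸ H) = (y : G ⧸ H) := hρ h1
    rw [hq] at hxy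
    have h3 : A (y : G ⧸ H) (hV x) = A (y : G ⧸ H) (hV y) := hcinj (mul_right_cancel hxy)
    have h4 : hV x = hV y := hA _ h3
    have h5 := hrec x
    rw [h4, hq] at h5
    exact h5.symm.trans (hrec y)
  refine ⟨fun x => c (F (s (Φ (x : G ⧸ H))) (hV x)) * s (Φ (x : G ⧸ H)), ?_, ?_, ?_, ?_⟩
  · -- σ itself
    exact main Φ (fun q v => F (s (Φ q)) v) _ hΦ0.injective
      (fun q => (hF1 (s (Φ q))).injective) (fun x => rfl)
  · -- x ↦ σ x * x
    apply main (fun q => Φ q * q)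
      (fun q v => F (s (Φ q)) v + ψ (s (Φ q)) v + hV (s (Φ q) * s q)) _
      hΦ1.injective
    · intro q a b h
      exact (hF2 (s (Φ q))).injective (add_right_cancel h)
    · intro x
      obtain ⟨v, q, rfl⟩ : ∃ v q, x = c v * s q := ⟨hV x, (x : G ⧸ H), (hrec x).symm⟩
      simp only [hπcs, hVcs]
      rw [hcadd, hcadd, hψc, hchV]
      rw [show ((s (Φ q) * s q : G) : G ⧸ H) = Φ q * q by rw [QuotientGroup.mk_mul, hs, hs]]
      group
  · -- x ↦ x⁻¹ * σ x
    apply main (fun q => q⁻¹ * Φ q)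
      (fun q v => ψ (s q)⁻¹ (-v + F (s (Φ q)) v) + hV ((s q)⁻¹ * s (Φ q))) _
      hΦ2.injective
    · intro q a b h
      have h1 := (hψinj _) (add_right_cancel h)
      have h2 : ∀ w : V3, -w + F (s (Φ q)) w = F (s (Φ q)) w - w := fun w => neg_add_eq_sub _ _
      rw [h2, h2] at h1
      exact (hF3 (s (Φ q))).injective h1
    · intro x
      obtain ⟨v, q, rfl⟩ : ∃ v q, x = c v * s q := ⟨hV x, (x : G ⧸ H), (hrec x).symm⟩
      simp only [hπcs, hVcs]
      rw [hcadd, hψc, hcadd, hcneg, hchV]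
      rw [show (((s q)⁻¹ * s (Φ q) : G) : G ⧸ H) = q⁻¹ * Φ q by
        rw [QuotientGroup.mk_mul, QuotientGroup.mk_inv, hs, hs]]
      group
  · -- x ↦ x⁻¹ * σ x * x
    have hρ : Function.Injective (fun q : G ⧸ H => q⁻¹ * (Φ q * q)) := by
      have h : (fun q : G ⧸ H => q⁻¹ * (Φ q * q)) = (fun q => q⁻¹ * Φ q * q) := by
        funext q; rw [mul_assoc]
      rw [h]; exact hΦ3.injective
    apply main (fun q => q⁻¹ * (Φ q * q))
      (fun q v => ψ (s q)⁻¹ (-v + F (s (Φ q)) v + ψ (s (Φ q)) v + hV (s (Φ q) * s q))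
        + hV ((s q)⁻¹ * s (Φ q * q))) _ hρ
    · intro q a b h
      have h1 := (hψinj _) (add_right_cancel h)
      have h2 := add_right_cancel h1
      have h3 : ∀ w : V3, -w + F (s (Φ q)) w + ψ (s (Φ q)) w
          = F (s (Φ q)) w + ψ (s (Φ q)) w - w := by intro w; abel
      rw [h3, h3] at h2
      exact (hF4 (s (Φ q))).injective h2
    · intro x
      obtain ⟨v, q, rfl⟩ : ∃ v q, x = c v * s q := ⟨hV x, (x : G ⧸ H), (hrec x).symm⟩
      simp only [hπcs, hVcs]
      rw [hcadd, hψc, hcadd, hcadd, hcadd, hcneg, hψc, hchV, hchV]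
      rw [show ((s (Φ q) * s q : G) : G ⧸ H) = Φ q * q by rw [QuotientGroup.mk_mul, hs, hs]]
      rw [show (((s q)⁻¹ * s (Φ q * q) : G) : G ⧸ H) = q⁻¹ * (Φ q * q) by
        rw [QuotientGroup.mk_mul, QuotientGroup.mk_inv, hs, hs]]
      group
end

section
/- Let G be a finite 3-group and let H be an abelian normal subgroup of G isomorphic to C₉ × C₃. If the quotient group G/H admits a colouring bijection, then G admits a colouring bijection. -/
/-!
Fix coset representatives `u_q` of `H` in `G`. A colouring bijection `Φ` of `G ⧸ H` lifts to
`σ (u_q h) = u_{Φ q} u_q τ_q(h) u_q⁻¹` as soon as every `τ_q : H → H` is a colouring bijection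
of `H` twisted by conjugation with `w_q = u_q⁻¹ u_{Φ q} u_q`: on the coset `u_q H` the four maps
of the definition become, up to fixed left and right factors, `τ_q`, `h ↦ τ_q h * h`,
`h ↦ (w_q⁻¹ h w_q)⁻¹ * τ_q h` and `h ↦ (w_q⁻¹ h w_q)⁻¹ * τ_q h * h`.

For `H ≅ C₉ × C₃` the twist is an automorphism of `3`-power order. It acts on the sections
`3H ≅ C₃` and `H[3] / 3H ≅ C₃` by scalars whose `3`-power is `1`, hence trivially, which leaves
`27` possible automorphisms; four explicit bijections of `C₉ × C₃` serve all of them.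
-/

open Function Multiplicative

/-- For `φ = id` this is `IsColouringBijection τ`. -/
def IsTwistedColouringBijection {H : Type*} [Group H] (φ τ : H → H) : Prop :=
  Bijective τ ∧ Bijective (fun x => τ x * x) ∧ Bijective (fun x => (φ x)⁻¹ * τ x) ∧
    Bijective (fun x => (φ x)⁻¹ * τ x * x)

instance {H : Type*} [Group H] [Fintype H] [DecidableEq H] (φ : H → H) :
    DecidablePred (IsTwistedColouringBijection φ) := fun τ => by
  unfold IsTwistedColouringBijection; infer_instance

theorem IsTwistedColouringBijection.comp_mulEquiv {H K : Type*} [Group H] [Group K]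
    {φ τ : K → K} (h : IsTwistedColouringBijection φ τ) (e : H ≃* K) :
    IsTwistedColouringBijection (e.symm ∘ φ ∘ e) (e.symm ∘ τ ∘ e) := by
  obtain ⟨h₁, h₂, h₃, h₄⟩ := h
  have transport {f : K → K} (hf : Bijective f) : Bijective (e.symm ∘ f ∘ e) :=
    e.symm.bijective.comp (hf.comp e.bijective)
  refine ⟨transport h₁, ?_, ?_, ?_⟩
  · convert transport h₂ using 1; ext; simp
  · convert transport h₃ using 1; ext; simp
  · convert transport h₄ using 1; ext; simp

section Lift

variable {G : Type*} [Group G] {H : Subgroup G}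

theorem exists_eq_out_mul_of_mk_eq {x : G} {q : G ⧸ H} (hx : (x : G ⧸ H) = q) :
    ∃ h : H, x = q.out * h :=
  ⟨⟨_, QuotientGroup.eq.mp (hx ▸ QuotientGroup.out_eq' q)⟩, (mul_inv_cancel_left _ _).symm⟩

theorem bijective_of_cosetwise [Finite G] {f : G → G} {F : G ⧸ H → G ⧸ H} (hF : Bijective F)
    (hfF : ∀ x : G, (f x : G ⧸ H) = F x) (k : G ⧸ H → H → H) (hk : ∀ q, Injective (k q))
    (l r : G ⧸ H → G) (hf : ∀ q (h : H), f (q.out * h) = l q * k q h * r q) : Bijective f := by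
  refine Finite.injective_iff_bijective.mp fun x y hxy => ?_
  have hq : (x : G ⧸ H) = y := hF.injective (by rw [← hfF, ← hfF, hxy])
  generalize hx : (x : G ⧸ H) = q at hq
  obtain ⟨hx, rfl⟩ := exists_eq_out_mul_of_mk_eq hx
  obtain ⟨hy, rfl⟩ := exists_eq_out_mul_of_mk_eq hq.symm
  rw [hf, hf] at hxy
  rw [hk q (Subtype.ext (mul_left_cancel (mul_right_cancel hxy)))]

theorem IsColouringBijection.lift [Finite G] [H.Normal] {Φ : G ⧸ H → G ⧸ H}
    (hΦ : IsColouringBijection Φ)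
    (htwist : ∀ g : G, ∃ τ : H → H, IsTwistedColouringBijection (MulAut.conjNormal g) τ) :
    ∃ σ : G → G, IsColouringBijection σ := by
  obtain ⟨hΦ₁, hΦ₂, hΦ₃, hΦ₄⟩ := hΦ
  let w (q : G ⧸ H) : G := q.out⁻¹ * (Φ q).out * q.out
  choose τ hτ using fun q => htwist (w q)⁻¹
  let σ (x : G) : G := (Φ x).out * (x : G ⧸ H).out *
    τ x ⟨_, QuotientGroup.eq.mp (QuotientGroup.out_eq' (x : G ⧸ H))⟩ * (x : G ⧸ H).out⁻¹
  have hσ (q : G ⧸ H) (h : H) : σ (q.out * h) = (Φ q).out * q.out * τ q h * q.out⁻¹ := by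
    have hσq (x : G) (hx : (x : G ⧸ H) = q) : σ x = (Φ q).out * q.out *
        τ q ⟨q.out⁻¹ * x, hx ▸ QuotientGroup.eq.mp (QuotientGroup.out_eq' _)⟩ * q.out⁻¹ := by
      subst hx; rfl
    simp [hσq _ (by simp : ((q.out * h : G) : G ⧸ H) = q)]
  have hσmk (x : G) : (σ x : G ⧸ H) = Φ x := by
    simp [σ]
  refine ⟨σ, bijective_of_cosetwise hΦ₁ hσmk τ (fun q => (hτ q).1.injective)
    (fun q => (Φ q).out * q.out) (fun q => q.out⁻¹) hσ, ?_, ?_, ?_⟩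
  · refine bijective_of_cosetwise hΦ₂ (fun x => by simp [hσmk]) _
      (fun q => (hτ q).2.1.injective) (fun q => (Φ q).out * q.out) (fun _ => 1) fun q h => ?_
    simp only [hσ, Subgroup.coe_mul]; group
  · refine bijective_of_cosetwise hΦ₃ (fun x => by simp [hσmk]) _
      (fun q => (hτ q).2.2.1.injective) w (fun q => q.out⁻¹) fun q h => ?_
    simp only [hσ, w, Subgroup.coe_mul, InvMemClass.coe_inv, MulAut.conjNormal_apply]; group
  · refine bijective_of_cosetwise hΦ₄ (fun x => by simp [hσmk]) _
      (fun q => (hτ q).2.2.2.injective) w (fun _ => 1) fun q h => ?_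
    simp only [hσ, w, Subgroup.coe_mul, InvMemClass.coe_inv, MulAut.conjNormal_apply]; group

end Lift

section C9xC3

variable {F : Type*}
  [FunLike F (Multiplicative (ZMod 9 × ZMod 3)) (Multiplicative (ZMod 9 × ZMod 3))]
  [MonoidHomClass F (Multiplicative (ZMod 9 × ZMod 3)) (Multiplicative (ZMod 9 × ZMod 3))]

theorem toAdd_map_ofAdd_eq_nsmul_add_nsmul (ψ : F) (p : ZMod 9 × ZMod 3) :
    (ψ (ofAdd p)).toAdd =
      p.1.val • (ψ (ofAdd (1, 0))).toAdd + p.2.val • (ψ (ofAdd (0, 1))).toAdd := by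
  have hp : p = p.1.val • (1, 0) + p.2.val • (0, 1) := by ext <;> simp
  conv_lhs => rw [hp]
  rw [ofAdd_add, ofAdd_nsmul, ofAdd_nsmul, map_mul, map_pow, map_pow, toAdd_mul, toAdd_pow,
    toAdd_pow]

theorem three_nsmul_toAdd_map_ofAdd_zero_one (ψ : F) : 3 • (ψ (ofAdd (0, 1))).toAdd = 0 := by
  rw [← toAdd_pow, ← map_pow, ← ofAdd_nsmul, show (3 • (0, 1) : ZMod 9 × ZMod 3) = 0 by decide,
    ofAdd_zero, map_one, toAdd_one]

/-- An automorphism of `C₉ × C₃` acts on `3 • (C₉ × C₃) ≅ C₃` and on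
`(C₉ × C₃)[3] / 3 • (C₉ × C₃) ≅ C₃` by these two scalars: the diagonal of its matrix mod `3`. -/
def diagModThree : MulAut (Multiplicative (ZMod 9 × ZMod 3)) →* ZMod 3 × ZMod 3 where
  toFun ψ := ((ψ (ofAdd (1, 0))).toAdd.1.cast, (ψ (ofAdd (0, 1))).toAdd.2)
  map_one' := rfl
  map_mul' ψ₁ ψ₂ := by
    have fst_mul : ∀ (x a b : ZMod 9) (y : ZMod 3), 3 • b = 0 →
        ((x.val • a + y.val • b : ZMod 9).cast : ZMod 3) = x.cast * a.cast := by
      decide +kernel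
    have snd_mul : ∀ (x : ZMod 9) (y c d : ZMod 3), 3 • x = 0 →
        x.val • c + y.val • d = y * d := by
      decide +kernel
    have hu := toAdd_map_ofAdd_eq_nsmul_add_nsmul ψ₁ (ψ₂ (ofAdd (1, 0))).toAdd
    have hv := toAdd_map_ofAdd_eq_nsmul_add_nsmul ψ₁ (ψ₂ (ofAdd (0, 1))).toAdd
    have hb₁ := congrArg Prod.fst (three_nsmul_toAdd_map_ofAdd_zero_one ψ₁)
    have hb₂ := congrArg Prod.fst (three_nsmul_toAdd_map_ofAdd_zero_one ψ₂)
    rw [ofAdd_toAdd] at hu hv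
    simp only [Prod.smul_fst, Prod.fst_zero] at hb₁ hb₂
    simp only [MulAut.mul_apply, hu, hv, Prod.mk_mul_mk, Prod.fst_add, Prod.snd_add,
      Prod.smul_fst, Prod.smul_snd, fst_mul _ _ _ _ hb₁, snd_mul _ _ _ _ hb₂]
    ring_nf

theorem diagModThree_eq_one {ψ : MulAut (Multiplicative (ZMod 9 × ZMod 3))} {n : ℕ}
    (hψ : ψ ^ 3 ^ n = 1) : diagModThree ψ = 1 :=
  calc diagModThree ψ = diagModThree ψ ^ 3 ^ n := by ext <;> simp [ZMod.pow_card_pow]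
    _ = 1 := by rw [← map_pow, hψ, map_one]

/-- Row `x`, column `y` of a table is the image of `(x, y)`; the tables were found by a SAT
search. -/
def colouringTable : Fin 4 → ZMod 9 → ZMod 3 → ZMod 9 × ZMod 3 :=
  ![![![(0, 0), (8, 0), (1, 0)],
    ![(0, 1), (7, 2), (2, 0)],
    ![(5, 0), (3, 1), (1, 2)],
    ![(4, 2), (3, 2), (2, 2)],
    ![(5, 2), (3, 0), (1, 1)],
    ![(4, 1), (8, 2), (6, 0)],
    ![(5, 1), (7, 1), (6, 1)],
    ![(4, 0), (8, 1), (6, 2)],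
    ![(0, 2), (7, 0), (2, 1)]],
  ![![(0, 0), (6, 1), (3, 2)],
    ![(0, 2), (6, 0), (3, 1)],
    ![(2, 1), (8, 2), (5, 0)],
    ![(4, 0), (1, 1), (7, 2)],
    ![(4, 2), (1, 0), (7, 1)],
    ![(4, 1), (1, 2), (7, 0)],
    ![(2, 0), (8, 1), (5, 2)],
    ![(2, 2), (8, 0), (5, 1)],
    ![(0, 1), (6, 2), (3, 0)]],
  ![![(0, 0), (5, 0), (7, 0)],
    ![(8, 2), (3, 1), (1, 0)],
    ![(6, 0), (4, 2), (2, 1)],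
    ![(5, 2), (7, 2), (0, 2)],
    ![(3, 0), (1, 2), (8, 1)],
    ![(4, 1), (2, 0), (6, 2)],
    ![(7, 1), (0, 1), (5, 1)],
    ![(1, 1), (8, 0), (3, 2)],
    ![(2, 2), (6, 1), (4, 0)]],
  ![![(0, 0), (0, 1), (0, 2)],
    ![(1, 0), (1, 1), (1, 2)],
    ![(4, 0), (4, 1), (4, 2)],
    ![(7, 0), (7, 1), (7, 2)],
    ![(3, 0), (3, 1), (3, 2)],
    ![(8, 0), (8, 1), (8, 2)],
    ![(2, 0), (2, 1), (2, 2)],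
    ![(5, 0), (5, 1), (5, 2)],
    ![(6, 0), (6, 1), (6, 2)]]]

/-- `u` and `v` are the images of the generators `(1, 0)` and `(0, 1)`; the hypotheses leave the
`27` automorphisms allowed by `diagModThree_eq_one`. -/
theorem exists_isTwistedColouringBijection_colouringTable : ∀ u v : ZMod 9 × ZMod 3,
    (u.1.cast : ZMod 3) = 1 → v.2 = 1 → 3 • v = 0 → ∃ k, IsTwistedColouringBijection
      (fun x => ofAdd (x.toAdd.1.val • u + x.toAdd.2.val • v))
      (fun x => ofAdd (colouringTable k x.toAdd.1 x.toAdd.2)) := by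
  decide +kernel

theorem exists_isTwistedColouringBijection_of_pow_eq_one {H : Type*} [Group H]
    (e : H ≃* Multiplicative (ZMod 9 × ZMod 3)) {φ : MulAut H} {n : ℕ} (hφ : φ ^ 3 ^ n = 1) :
    ∃ τ : H → H, IsTwistedColouringBijection φ τ := by
  set ψ := MulAut.congr e φ
  have hχ := diagModThree_eq_one (ψ := ψ) (by rw [← map_pow, hφ, map_one])
  obtain ⟨k, hk⟩ := exists_isTwistedColouringBijection_colouringTable _ _
    (congrArg Prod.fst hχ) (congrArg Prod.snd hχ) (three_nsmul_toAdd_map_ofAdd_zero_one ψ)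
  have hψ : (fun x => ofAdd (x.toAdd.1.val • (ψ (ofAdd (1, 0))).toAdd +
      x.toAdd.2.val • (ψ (ofAdd (0, 1))).toAdd)) = ⇑ψ :=
    funext fun x => by rw [← toAdd_map_ofAdd_eq_nsmul_add_nsmul]; rfl
  have hφψ : e.symm ∘ ψ ∘ e = φ := by ext; simp [ψ]
  rw [hψ] at hk
  exact ⟨_, hφψ ▸ hk.comp_mulEquiv e⟩

end C9xC3

theorem lift_C9xC3_general
    {G : Type*} [Group G] [Fintype G]
    (hG : ∃ n : ℕ, Fintype.card G = 3 ^ n)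
    (H : Subgroup G) [H.Normal]
    (hiso : Nonempty (H ≃* Multiplicative (ZMod 9 × ZMod 3)))
    (hquot : ∃ Φ : G ⧸ H → G ⧸ H, IsColouringBijection Φ) :
    ∃ σ : G → G, IsColouringBijection σ := by
  obtain ⟨n, hn⟩ := hG
  obtain ⟨e⟩ := hiso
  obtain ⟨Φ, hΦ⟩ := hquot
  refine hΦ.lift fun g => exists_isTwistedColouringBijection_of_pow_eq_one e (n := n) ?_
  rw [← map_pow, ← hn, pow_card_eq_one, map_one]

/-- Lifting along `C₉ × C₃`: let `G` be a finite 3-group with an abelian normal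
subgroup `H ≅ C₉ × C₃`.  If `G/H` admits a colouring bijection, then so does `G`. -/
theorem lift_C9xC3
    {G : Type*} [Group G] [Fintype G]
    (hG : ∃ n : ℕ, Fintype.card G = 3 ^ n)
    (H : Subgroup G) [H.Normal]
    (habelian : ∀ x y : G, x ∈ H → y ∈ H → x * y = y * x)
    (hiso : Nonempty (H ≃* Multiplicative (ZMod 9 × ZMod 3)))
    (hquot : ∃ Φ : G ⧸ H → G ⧸ H, IsColouringBijection Φ) :
    ∃ σ : G → G, IsColouringBijection σ :=
  lift_C9xC3_general hG H hiso hquot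
end
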